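/- arXiv:math/0407226 — 6 statements merged into one kernel-verified Lean document; each statement's English description precedes it below -/
import Mathlib

section
/- An integer b divides all of the binomial coefficients C(n, k+1), C(n, k+2), ..., C(n, k+i) if and only if b divides all of the binomial coefficients C(n, k+1), C(n+1, k+2), ..., C(n+i-1, k+i). -/
/-!
Induct on `i`. Vandermonde's identity `C(n + i, r) = ∑ₐ C(i, a) C(n, r - a)` shows that
`C(n + i, k + i + 1) - C(n, k + i + 1)` is a combination of `C(n, k + j)` with `1 ≤ j ≤ i`, so
once `b` divides those, the two new conditions `b ∣ C(n, k + i + 1)` and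
`b ∣ C(n + i, k + i + 1)` are equivalent.
-/

open Finset

theorem dvd_choose_add_iff_dvd_choose {R : Type*} [CommRing R] {b : R} {n k i : ℕ}
    (h : ∀ j ∈ Icc 1 i, b ∣ (n.choose (k + j) : R)) :
    b ∣ ((n + i).choose (k + (i + 1)) : R) ↔ b ∣ (n.choose (k + (i + 1)) : R) := by
  have hsum : b ∣ ∑ p ∈ antidiagonal (k + i), (i.choose (p.1 + 1) * n.choose p.2 : R) := by
    refine dvd_sum fun ⟨a, c⟩ hac => ?_
    rw [HasAntidiagonal.mem_antidiagonal] at hac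
    rcases lt_or_ge a i with hai | hia
    · obtain rfl : c = k + (i - a) := by omega
      exact (h (i - a) (mem_Icc.mpr ⟨by omega, by omega⟩)).mul_left _
    · simp [Nat.choose_eq_zero_of_lt (by omega : i < a + 1)]
  rw [add_comm n i, Nat.add_choose_eq, ← add_assoc, Nat.sum_antidiagonal_succ]
  simp only [Nat.cast_add, Nat.cast_sum, Nat.cast_mul]
  rw [Nat.choose_zero_right, Nat.cast_one, one_mul, dvd_add_left hsum]

theorem stmt_1 (n k i : ℕ) (b : ℤ) :
    (∀ j ∈ Finset.Icc 1 i, b ∣ (n.choose (k + j) : ℤ)) ↔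
      (∀ j ∈ Finset.Icc 1 i, b ∣ ((n + j - 1).choose (k + j) : ℤ)) := by
  induction i with
  | zero => simp
  | succ i ih =>
    rw [← insert_Icc_right_eq_Icc_add_one (by omega), forall_mem_insert, forall_mem_insert,
      show n + (i + 1) - 1 = n + i by omega, ← ih]
    exact and_congr_left fun h => (dvd_choose_add_iff_dvd_choose h).symm
end

section
/- Fix natural numbers N, n, r with r ≤ n. Then 2^(N-i+1) divides C(n, i) for all i with n-r < i ≤ N if and only if 2^(N-i+1) divides C(r+i-1, i) for all i with n-r < i ≤ N. -/
/-!
Put `m = r + i - 1 - n`, so that `r + i - 1 = n + m` and `m < i - (n - r)`. Vandermonde's identity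
writes `C(r + i - 1, i)` as `∑_b C(m, i - b) C(n, b)`, where only the terms with `n - r < b ≤ i`
survive. Hence `C(r + i - 1, i)` is `C(n, i)` plus an integral combination of the `C(n, b)` with
`n - r < b < i`: a unitriangular change of sequence. As the moduli `2 ^ (N - i + 1)` only get
coarser as `i` grows, such a change preserves the divisibility conditions in both directions
(by strong induction on `i` for the converse).
-/

open Finset

theorem forall_dvd_iff_of_eq_add_sum {s N : ℕ} {D f g : ℕ → ℕ} (c : ℕ → ℕ → ℕ)
    (hD : ∀ j i, j ≤ i → D i ∣ D j)
    (hg : ∀ i, s < i → g i = f i + ∑ b ∈ Ioo s i, c i b * f b) :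
    (∀ i, s < i → i ≤ N → D i ∣ f i) ↔ (∀ i, s < i → i ≤ N → D i ∣ g i) := by
  have dvd_sum_lower : ∀ i, (∀ b, s < b → b < i → D b ∣ f b) →
      D i ∣ ∑ b ∈ Ioo s i, c i b * f b := fun i hf =>
    dvd_sum fun b hb => by
      obtain ⟨hsb, hbi⟩ := mem_Ioo.mp hb
      exact ((hD b i hbi.le).trans (hf b hsb hbi)).mul_left _
  constructor
  · intro hf i hsi hiN
    rw [hg i hsi]
    exact dvd_add (hf i hsi hiN) (dvd_sum_lower i fun b hsb hbi => hf b hsb (by omega))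
  · intro hdg i
    induction i using Nat.strong_induction_on with
    | _ i ih =>
      intro hsi hiN
      have hsum := dvd_sum_lower i fun b hsb hbi => ih b hbi hsb (by omega)
      have hdgi := hdg i hsi hiN
      rwa [hg i hsi, Nat.dvd_add_left hsum] at hdgi

theorem choose_add_sub_one_eq_add_sum {n r i : ℕ} (hrn : r ≤ n) (hi : n - r < i) :
    (r + i - 1).choose i =
      n.choose i + ∑ b ∈ Ioo (n - r) i, (r + i - 1 - n).choose (i - b) * n.choose b := by
  set m := r + i - 1 - n
  have vandermonde : (r + i - 1).choose i = ∑ b ∈ range (i + 1), m.choose (i - b) * n.choose b := by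
    rw [show r + i - 1 = n + m by omega, Nat.add_choose_eq,
      Nat.sum_antidiagonal_eq_sum_range_succ (fun b a => n.choose b * m.choose a)]
    exact sum_congr rfl fun b _ => mul_comm _ _
  rw [vandermonde, ← sum_subset (s₁ := Ioc (n - r) i), ← Ioo_insert_right hi,
    sum_insert right_notMem_Ioo, Nat.sub_self, Nat.choose_zero_right, one_mul]
  · intro b hb
    simp only [mem_Ioc, mem_range] at hb ⊢
    omega
  · intro b hb hb'
    simp only [mem_range, mem_Ioc, not_and_or, not_lt, not_le] at hb hb'
    rw [Nat.choose_eq_zero_of_lt (by omega), zero_mul]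

theorem stmt_2 (N n r : ℕ) (hrn : r ≤ n) :
    (∀ i, n - r < i → i ≤ N → 2 ^ (N - i + 1) ∣ n.choose i) ↔
      (∀ i, n - r < i → i ≤ N → 2 ^ (N - i + 1) ∣ (r + i - 1).choose i) :=
  forall_dvd_iff_of_eq_add_sum _ (fun _ _ hji => Nat.pow_dvd_pow 2 (by omega))
    fun _ hi => choose_add_sub_one_eq_add_sum hrn hi
end

section
/- Let c ≥ 1 and let R = ℤ[ν]/(2^c·ν, ν² + 2ν). The additive subgroup of R generated by ν is cyclic of order 2^c; that is, m·ν = 0 in R if and only if 2^c divides m. -/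
/-! Evaluating at `ν = -2` gives a ring map `ℤ[ν] → ℤ/2^(c+1)` that kills both relations, so
`m • ν = 0` forces `2^(c+1) ∣ -2m`, i.e. `2^c ∣ m`; conversely `2^c • ν = 0` is a relation. -/

open Polynomial

lemma aeval_neg_two_X_sq_add_two_mul_X {S : Type*} [CommRing S] :
    aeval (-2 : S) (X ^ 2 + 2 * X : ℤ[X]) = 0 := by
  simp only [map_add, map_mul, map_pow, aeval_X, map_ofNat]
  ring

lemma aeval_neg_two_two_pow_mul_X (c : ℕ) :
    aeval (-2 : ZMod (2 ^ (c + 1))) ((2 : ℤ[X]) ^ c * X) = 0 := by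
  have h : ((2 ^ (c + 1) : ℕ) : ZMod (2 ^ (c + 1))) = 0 := ZMod.natCast_self _
  push_cast at h
  simp only [map_mul, map_pow, aeval_X, map_ofNat]
  linear_combination (-1 : ZMod (2 ^ (c + 1))) * h

lemma two_pow_dvd_iff_two_pow_succ_dvd_mul_two (c : ℕ) (m : ℤ) :
    (2 : ℤ) ^ (c + 1) ∣ m * 2 ↔ 2 ^ c ∣ m := by
  rw [pow_succ]
  exact mul_dvd_mul_iff_right two_ne_zero

theorem zsmul_X_mem_span_iff (c : ℕ) (m : ℤ) :
    m • X ∈ Ideal.span ({(2 : ℤ[X]) ^ c * X, X ^ 2 + 2 * X} : Set ℤ[X]) ↔ (2 : ℤ) ^ c ∣ m := by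
  constructor
  · intro hm
    let f : ℤ[X] →+* ZMod (2 ^ (c + 1)) := (aeval (-2 : ZMod (2 ^ (c + 1)))).toRingHom
    have hle : Ideal.span ({(2 : ℤ[X]) ^ c * X, X ^ 2 + 2 * X} : Set ℤ[X]) ≤ RingHom.ker f := by
      rw [Ideal.span_le]
      rintro p (rfl | rfl)
      · exact aeval_neg_two_two_pow_mul_X c
      · exact aeval_neg_two_X_sq_add_two_mul_X
    have hf : ((m * 2 : ℤ) : ZMod (2 ^ (c + 1))) = 0 := by
      have : f (m • X) = 0 := hle hm
      rw [map_zsmul, zsmul_eq_mul] at this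
      simp only [f, AlgHom.toRingHom_eq_coe, RingHom.coe_coe, aeval_X] at this
      push_cast
      linear_combination (-1 : ZMod (2 ^ (c + 1))) * this
    rw [ZMod.intCast_zmod_eq_zero_iff_dvd] at hf
    exact (two_pow_dvd_iff_two_pow_succ_dvd_mul_two c m).mp (by exact_mod_cast hf)
  · rintro ⟨k, rfl⟩
    have hk : ((2 : ℤ) ^ c * k) • (X : ℤ[X]) = C k * ((2 : ℤ[X]) ^ c * X) := by
      rw [smul_eq_C_mul, map_mul, map_pow, C_ofNat]
      ring
    rw [hk]
    exact Ideal.mul_mem_left _ _ (Ideal.subset_span (Or.inl rfl))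

theorem stmt_5_general (c : ℕ) :
    let R := Polynomial ℤ ⧸ Ideal.span
      ({(2 : Polynomial ℤ) ^ c * Polynomial.X, Polynomial.X ^ 2 + 2 * Polynomial.X} :
        Set (Polynomial ℤ))
    let ν : R := Ideal.Quotient.mk _ Polynomial.X
    ∀ m : ℤ, m • ν = 0 ↔ (2 : ℤ) ^ c ∣ m := by
  intro R ν m
  rw [← zsmul_X_mem_span_iff, ← Ideal.Quotient.eq_zero_iff_mem, map_zsmul]

theorem stmt_5 (c : ℕ) (hc : 1 ≤ c) :
    let R := Polynomial ℤ ⧸ Ideal.span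
      ({(2 : Polynomial ℤ) ^ c * Polynomial.X, Polynomial.X ^ 2 + 2 * Polynomial.X} :
        Set (Polynomial ℤ))
    let ν : R := Ideal.Quotient.mk _ Polynomial.X
    ∀ m : ℤ, m • ν = 0 ↔ (2 : ℤ) ^ c ∣ m :=
  stmt_5_general c
end

section
/- In the polynomial ring ℤ[t], the ideal generated by (2t - t²) and t^(k+1) equals the ideal generated by (2t - t²) and 2^k·t. -/
open Polynomial

lemma key_6 (k : ℕ) : ∃ q : Polynomial ℤ,
    X ^ (k + 1) = q * (2 * X - X ^ 2) + 2 ^ k * X := by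
  induction k with
  | zero => exact ⟨0, by ring⟩
  | succ n ih =>
    obtain ⟨q, hq⟩ := ih
    exact ⟨X * q - 2 ^ n, by linear_combination X * hq⟩

theorem stmt_6 (k : ℕ) :
    Ideal.span ({2 * X - X ^ 2, X ^ (k + 1)} : Set (Polynomial ℤ)) =
      Ideal.span ({2 * X - X ^ 2, 2 ^ k * X} : Set (Polynomial ℤ)) := by
  obtain ⟨q, hq⟩ := key_6 k
  have ha1 : (2 * X - X ^ 2 : Polynomial ℤ) ∈
      Ideal.span ({2 * X - X ^ 2, 2 ^ k * X} : Set (Polynomial ℤ)) :=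
    Ideal.subset_span (by simp)
  have hb1 : (2 ^ k * X : Polynomial ℤ) ∈
      Ideal.span ({2 * X - X ^ 2, 2 ^ k * X} : Set (Polynomial ℤ)) :=
    Ideal.subset_span (by simp)
  have ha2 : (2 * X - X ^ 2 : Polynomial ℤ) ∈
      Ideal.span ({2 * X - X ^ 2, X ^ (k + 1)} : Set (Polynomial ℤ)) :=
    Ideal.subset_span (by simp)
  have hb2 : (X ^ (k + 1) : Polynomial ℤ) ∈
      Ideal.span ({2 * X - X ^ 2, X ^ (k + 1)} : Set (Polynomial ℤ)) :=
    Ideal.subset_span (by simp)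
  apply le_antisymm <;> rw [Ideal.span_le] <;> rintro p (rfl | rfl)
  · exact ha1
  · rw [hq]
    exact Ideal.add_mem _ (Ideal.mul_mem_left _ _ ha1) hb1
  · exact ha2
  · have : (2 ^ k * X : Polynomial ℤ) = X ^ (k + 1) - q * (2 * X - X ^ 2) := by
      linear_combination -hq
    rw [this]
    exact Ideal.sub_mem _ hb2 (Ideal.mul_mem_left _ _ ha2)
end

section
/- Let c ≥ 1, R = ℤ[ν]/(2^c·ν, ν² + 2ν), and suppose there exists a sequence of elements (γ_i)_{i≥0} in R with γ_0 = 1 such that Σ_i γ_i t^i = (1 + tν)^(-r) in R[[t]] and γ_i = 0 for all i > n - r. Then 2^(c-i+1) divides C(r+i-1, i) for all i with n-r < i ≤ c. -/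
/-!
The `i`-th coefficient of `(1 + ν t) ^ (-r)` is `(-ν) ^ i * C(r + i - 1, i)`. Since `μ = -ν`
satisfies `μ ^ 2 = 2 * μ`, this is `2 ^ (i - 1) * C(r + i - 1, i) * μ`, and an integer multiple
`m * ν` vanishes in `R` only when `2 ^ c ∣ m`. So `γ_i = 0` forces
`2 ^ c ∣ 2 ^ (i - 1) * C(r + i - 1, i)`.
-/

theorem pow_succ_eq_two_pow_mul_of_sq_eq_two_mul {R : Type*} [CommSemiring R] {μ : R}
    (h : μ ^ 2 = 2 * μ) (j : ℕ) : μ ^ (j + 1) = 2 ^ j * μ := by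
  induction j with
  | zero => simp
  | succ j ih => rw [pow_succ, ih, mul_assoc, ← sq, h]; ring

namespace PowerSeries

theorem coeff_eq_of_mul_one_add_C_mul_X_pow_eq_one {R : Type*} [CommRing R]
    {a : R} {f : R⟦X⟧} {r : ℕ} (h : f * (1 + C a * X) ^ r = 1) (i : ℕ) :
    coeff i f = (-a) ^ i * (r + i - 1).choose i := by
  obtain _ | d := r
  · obtain rfl : f = 1 := by simpa using h
    rcases i with _ | i <;> simp [coeff_one]
  have hinv : (1 + C a * X) ^ (d + 1) * mk (fun n ↦ (-a) ^ n * (d + n).choose d) = 1 := by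
    have := congrArg (rescale (-a)) (mk_add_choose_mul_one_sub_pow_eq_one R d)
    rw [map_mul, map_pow, map_one, map_sub, map_one, rescale_X, rescale_mk, map_neg,
      neg_mul, sub_neg_eq_add] at this
    rwa [mul_comm]
  rw [left_inv_eq_right_inv h hinv, coeff_mk, Nat.add_right_comm, Nat.add_sub_cancel,
    Nat.choose_symm_add]

end PowerSeries

namespace Polynomial

theorem two_pow_dvd_of_intCast_mul_X_mem_span (c : ℕ) {m : ℤ}
    (h : (m : ℤ[X]) * X ∈ Ideal.span {(2 : ℤ[X]) ^ c * X, X ^ 2 + 2 * X}) : 2 ^ c ∣ m := by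
  obtain ⟨a, b, hab⟩ := Ideal.mem_span_pair.mp h
  -- At `X = -2` the relation `X ^ 2 + 2 * X` vanishes, leaving `-2 * m = a(-2) * 2 ^ c * (-2)`.
  have h2 := congrArg (eval (-2 : ℤ)) hab
  simp only [eval_add, eval_mul, eval_pow, eval_X, eval_ofNat, eval_intCast] at h2
  exact ⟨a.eval (-2),
    mul_left_cancel₀ (show (-2 : ℤ) ≠ 0 by norm_num) (by linear_combination -h2)⟩

end Polynomial

theorem stmt_8_general (c r n : ℕ) :
    let R := Polynomial ℤ ⧸ Ideal.span
      ({(2 : Polynomial ℤ) ^ c * Polynomial.X, Polynomial.X ^ 2 + 2 * Polynomial.X} :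
        Set (Polynomial ℤ))
    let ν : R := Ideal.Quotient.mk _ Polynomial.X
    ∀ γ : ℕ → R, γ 0 = 1 →
      (PowerSeries.mk γ) * (1 + PowerSeries.C ν * PowerSeries.X) ^ r = 1 →
      (∀ i, n - r < i → γ i = 0) →
      ∀ i, n - r < i → i ≤ c → 2 ^ (c - i + 1) ∣ (r + i - 1).choose i := by
  intro R ν γ _ hγ hvanish i hi hic
  obtain ⟨j, rfl⟩ : ∃ j, i = j + 1 := Nat.exists_eq_succ_of_ne_zero (by omega)
  have hνsq : (-ν) ^ 2 = 2 * -ν := by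
    have : ν ^ 2 + 2 * ν = 0 :=
      Ideal.Quotient.eq_zero_iff_mem.mpr (Ideal.subset_span (by simp))
    linear_combination this
  have hγj : γ (j + 1) = -(((2 ^ j * (r + j).choose (j + 1) : ℕ) : ℤ) : R) * ν := by
    rw [← PowerSeries.coeff_mk (j + 1) γ,
      PowerSeries.coeff_eq_of_mul_one_add_C_mul_X_pow_eq_one hγ,
      pow_succ_eq_two_pow_mul_of_sq_eq_two_mul hνsq, Nat.add_succ_sub_one]
    push_cast; ring
  have hdvd : 2 ^ c ∣ ((2 ^ j * (r + j).choose (j + 1) : ℕ) : ℤ) := by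
    refine Polynomial.two_pow_dvd_of_intCast_mul_X_mem_span c ?_
    rw [← Ideal.Quotient.eq_zero_iff_mem, map_mul, map_intCast]
    linear_combination -hγj.symm.trans (hvanish (j + 1) hi)
  rw [Nat.add_succ_sub_one]
  refine Nat.dvd_of_mul_dvd_mul_left (Nat.two_pow_pos j) ?_
  rw [← pow_add, show j + (c - (j + 1) + 1) = c by omega]
  exact_mod_cast hdvd

theorem stmt_8 (c r n : ℕ) (hc : 1 ≤ c) (hrn : r ≤ n) :
    let R := Polynomial ℤ ⧸ Ideal.span
      ({(2 : Polynomial ℤ) ^ c * Polynomial.X, Polynomial.X ^ 2 + 2 * Polynomial.X} :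
        Set (Polynomial ℤ))
    let ν : R := Ideal.Quotient.mk _ Polynomial.X
    ∀ γ : ℕ → R, γ 0 = 1 →
      (PowerSeries.mk γ) * (1 + PowerSeries.C ν * PowerSeries.X) ^ r = 1 →
      (∀ i, n - r < i → γ i = 0) →
      ∀ i, n - r < i → i ≤ c → 2 ^ (c - i + 1) ∣ (r + i - 1).choose i :=
  stmt_8_general c r n
end

section
/- The quotient ring ℤ[t]/(t^(2k+1), t^(k+1), 2t - t²) is isomorphic to ℤ[t]/(2^k·t, 2t - t²), and its additive group is isomorphic to ℤ ⊕ ℤ/2^k, with the free summand generated by 1 and the torsion summand generated by t. -/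
/-!
Modulo `2t - t² = t(2 - t)` one has `t^(j+1) ≡ 2^j t`, so both `t^(k+1)` and `t^(2k+1)` can be
traded for `2^k t`. Every polynomial `p` is congruent to `p(0) + q(2) t` modulo `t(t - 2)`, where
`p = p(0) + t q`; and `c + m t` lies in `(2^k t, 2t - t²)` only if `c = 0` (evaluate at `0`) and
`2^k ∣ m` (cancel `t`, then evaluate at `2`). Hence `(c, m) ↦ c + m t` is an additive isomorphism
`ℤ × ℤ/2^k ≃ ℤ[t]/(2^k t, 2t - t²)`.
-/

open Polynomial

theorem Ideal.span_pow_succ_pair_eq {S : Type*} [CommRing S] (x b : S) (k : ℕ) :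
    Ideal.span {x ^ (k + 1), b * x - x ^ 2} = Ideal.span {b ^ k * x, b * x - x ^ 2} := by
  obtain ⟨c, hc⟩ := sub_dvd_pow_sub_pow x b k
  rw [← Ideal.span_pair_add_mul_right (b ^ k * x) _ (-c)]
  congr
  linear_combination x * hc

theorem Ideal.span_insert_pow_eq {S : Type*} [CommRing S] (x b : S) (k : ℕ) :
    Ideal.span {x ^ (2 * k + 1), x ^ (k + 1), b * x - x ^ 2} =
      Ideal.span {b ^ k * x, b * x - x ^ 2} := by
  have hmem : x ^ (2 * k + 1) ∈ Ideal.span {x ^ (k + 1), b * x - x ^ 2} := by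
    rw [show 2 * k + 1 = k + (k + 1) by ring, pow_add x k (k + 1)]
    exact Ideal.mul_mem_left _ (x ^ k) (Ideal.subset_span (by simp))
  rw [← Ideal.span_pow_succ_pair_eq]
  exact Submodule.span_insert_eq_span hmem

theorem mul_X_sub_X_sq_dvd_sub {R : Type*} [CommRing R] (a : R) (p : R[X]) :
    C a * X - X ^ 2 ∣ p - (C (p.coeff 0) + C (p.divX.eval a) * X) := by
  obtain ⟨c, hc⟩ := X_sub_C_dvd_sub_C_eval (a := a) (p := p.divX)
  exact ⟨-c, by linear_combination X * hc - X_mul_divX_add p⟩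

theorem eq_zero_and_dvd_of_C_add_C_mul_X_mem {n : ℕ} {a c m : ℤ}
    (h : C c + C m * X ∈ Ideal.span {(n : ℤ[X]) * X, C a * X - X ^ 2}) :
    c = 0 ∧ (n : ℤ) ∣ m := by
  obtain ⟨u, v, huv⟩ := Ideal.mem_span_pair.mp h
  have hc : c = 0 := by simpa using (congrArg (eval 0) huv).symm
  subst hc
  have hm : (u * (n : ℤ[X]) + v * (C a - X)) * X = C m * X := by
    rw [map_zero, zero_add] at huv
    linear_combination huv
  refine ⟨rfl, u.eval a, ?_⟩
  simpa [mul_comm] using (congrArg (eval a) (mul_right_cancel₀ X_ne_zero hm)).symm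

section
variable (n : ℕ) (a : ℤ)

theorem natCast_zsmul_mk_X_eq_zero :
    (n : ℤ) • Ideal.Quotient.mk (Ideal.span {(n : ℤ[X]) * X, C a * X - X ^ 2}) X = 0 := by
  rw [natCast_zsmul, nsmul_eq_mul, ← map_natCast (Ideal.Quotient.mk _), ← map_mul,
    Ideal.Quotient.eq_zero_iff_mem]
  exact Ideal.subset_span (by simp)

noncomputable def intProdZModToQuotient :
    ℤ × ZMod n →+ ℤ[X] ⧸ Ideal.span {(n : ℤ[X]) * X, C a * X - X ^ 2} :=
  (Int.castAddHom _).coprod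
    (ZMod.lift n ⟨zmultiplesHom _ (Ideal.Quotient.mk _ X), natCast_zsmul_mk_X_eq_zero n a⟩)

theorem intProdZModToQuotient_apply (c m : ℤ) :
    intProdZModToQuotient n a (c, m) = Ideal.Quotient.mk _ (C c + C m * X) := by
  simp [intProdZModToQuotient, ZMod.lift_coe, zsmul_eq_mul]

theorem intProdZModToQuotient_bijective : Function.Bijective (intProdZModToQuotient n a) := by
  constructor
  · rw [injective_iff_map_eq_zero]
    rintro ⟨c, m⟩ h
    obtain ⟨m, rfl⟩ := ZMod.intCast_surjective m
    rw [intProdZModToQuotient_apply, Ideal.Quotient.eq_zero_iff_mem] at h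
    obtain ⟨rfl, hm⟩ := eq_zero_and_dvd_of_C_add_C_mul_X_mem h
    simp [(ZMod.intCast_zmod_eq_zero_iff_dvd m n).mpr hm]
  · intro x
    obtain ⟨p, rfl⟩ := Ideal.Quotient.mk_surjective x
    refine ⟨(p.coeff 0, (p.divX.eval a : ℤ)), ?_⟩
    rw [intProdZModToQuotient_apply]
    refine (Ideal.Quotient.eq.mpr ?_).symm
    obtain ⟨q, hq⟩ := mul_X_sub_X_sq_dvd_sub a p
    rw [hq]
    exact Ideal.mul_mem_right _ _ (Ideal.subset_span (by simp))

noncomputable def intProdZModEquivQuotient :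
    ℤ × ZMod n ≃+ ℤ[X] ⧸ Ideal.span {(n : ℤ[X]) * X, C a * X - X ^ 2} :=
  AddEquiv.ofBijective _ (intProdZModToQuotient_bijective n a)

theorem intProdZModEquivQuotient_apply (c m : ℤ) :
    intProdZModEquivQuotient n a (c, m) = Ideal.Quotient.mk _ (C c + C m * X) :=
  intProdZModToQuotient_apply n a c m

end

theorem stmt_16_general (k : ℕ) :
    let A := Polynomial ℤ ⧸ Ideal.span
      ({X ^ (2 * k + 1), X ^ (k + 1), 2 * X - X ^ 2} : Set (Polynomial ℤ))
    let B := Polynomial ℤ ⧸ Ideal.span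
      ({(2 : Polynomial ℤ) ^ k * X, 2 * X - X ^ 2} : Set (Polynomial ℤ))
    (∃ e : A ≃+* B, e (Ideal.Quotient.mk _ X) = Ideal.Quotient.mk _ X) ∧
      ∃ g : A ≃+ ℤ × ZMod (2 ^ k),
        g 1 = (1, 0) ∧ g (Ideal.Quotient.mk _ X) = (0, 1) := by
  intro A B
  have hAB := Ideal.span_insert_pow_eq (X : ℤ[X]) 2 k
  have hB : Ideal.span {(2 : ℤ[X]) ^ k * X, 2 * X - X ^ 2} =
      Ideal.span {((2 ^ k : ℕ) : ℤ[X]) * X, C 2 * X - X ^ 2} := by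
    rw [Nat.cast_pow, Nat.cast_ofNat, C_ofNat]
  let g := (Ideal.quotEquivOfEq (hAB.trans hB)).toAddEquiv.trans
    (intProdZModEquivQuotient (2 ^ k) 2).symm
  refine ⟨⟨Ideal.quotEquivOfEq hAB, Ideal.quotEquivOfEq_mk hAB X⟩, g, ?_, ?_⟩
  · rw [AddEquiv.trans_apply, AddEquiv.symm_apply_eq, RingEquiv.toAddEquiv_eq_coe,
      RingEquiv.coe_toAddEquiv]
    simpa using (intProdZModEquivQuotient_apply (2 ^ k) 2 1 0).symm
  · rw [AddEquiv.trans_apply, AddEquiv.symm_apply_eq, RingEquiv.toAddEquiv_eq_coe,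
      RingEquiv.coe_toAddEquiv, Ideal.quotEquivOfEq_mk]
    simpa using (intProdZModEquivQuotient_apply (2 ^ k) 2 0 1).symm

theorem stmt_16 (k : ℕ) (hk : 1 ≤ k) :
    let A := Polynomial ℤ ⧸ Ideal.span
      ({X ^ (2 * k + 1), X ^ (k + 1), 2 * X - X ^ 2} : Set (Polynomial ℤ))
    let B := Polynomial ℤ ⧸ Ideal.span
      ({(2 : Polynomial ℤ) ^ k * X, 2 * X - X ^ 2} : Set (Polynomial ℤ))
    (∃ e : A ≃+* B, e (Ideal.Quotient.mk _ X) = Ideal.Quotient.mk _ X) ∧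
      ∃ g : A ≃+ ℤ × ZMod (2 ^ k),
        g 1 = (1, 0) ∧ g (Ideal.Quotient.mk _ X) = (0, 1) :=
  stmt_16_general k
end
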